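/- arXiv:2602.03732 — 6 statements merged into one kernel-verified Lean document; each statement's English description precedes it below -/
import Mathlib

section
/- Let x_1, ..., x_n be real numbers and let G_1, ..., G_n be i.i.d. standard Gumbel random variables (with CDF F(x) = exp(-exp(-x))). Then for each index i, the probability that x_i + G_i = max_j (x_j + G_j) equals exp(x_i) / (sum_{j=1}^n exp(x_j)). (The Gumbel-Max Trick.) -/
/-!
Condition on `G i = t`. The event then asks `G j ≤ t + x i - x j` for every `j ≠ i`, which by
independence has probability `∏ F (t + x i - x j) = exp (-S * exp (-t))` with
`S = ∑_{j ≠ i} exp (x j - x i)`. Against the Gumbel density `exp (-t) * exp (-exp (-t))` this is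
`1 / (1 + S)` times the Gumbel density shifted by `log (1 + S)`, so the probability is
`1 / (1 + S) = exp (x i) / ∑ j, exp (x j)`.
-/

open MeasureTheory ProbabilityTheory Real Set Filter Topology

/-- Density of the Gumbel law shifted by `log A`; its CDF is `exp (-A * exp (-t))`. -/
noncomputable def gumbelPDFReal (A t : ℝ) : ℝ := A * exp (-t) * exp (-A * exp (-t))

section GumbelDensity

variable {A : ℝ}

lemma gumbelPDFReal_nonneg (hA : 0 ≤ A) (t : ℝ) : 0 ≤ gumbelPDFReal A t := by
  unfold gumbelPDFReal; positivity

@[fun_prop]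
lemma continuous_gumbelPDFReal (A : ℝ) : Continuous (gumbelPDFReal A) := by
  unfold gumbelPDFReal; fun_prop

lemma hasDerivAt_exp_neg_mul_exp_neg (A t : ℝ) :
    HasDerivAt (fun s => exp (-A * exp (-s))) (gumbelPDFReal A t) t := by
  have := (((hasDerivAt_neg t).exp).const_mul (-A)).exp
  convert this using 1
  simp only [gumbelPDFReal]
  ring

lemma tendsto_exp_neg_mul_exp_neg_atBot (hA : 0 < A) :
    Tendsto (fun s => exp (-A * exp (-s))) atBot (𝓝 0) :=
  tendsto_exp_atBot.comp <| (tendsto_exp_atTop.comp tendsto_neg_atBot_atTop).const_mul_atTop_of_neg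
    (neg_neg_iff_pos.mpr hA)

lemma tendsto_exp_neg_mul_exp_neg_atTop (A : ℝ) :
    Tendsto (fun s => exp (-A * exp (-s))) atTop (𝓝 1) := by
  have h : Tendsto (fun s : ℝ => -A * exp (-s)) atTop (𝓝 0) := by
    simpa using (tendsto_exp_atBot.comp tendsto_neg_atTop_atBot).const_mul (-A)
  simpa [Function.comp_def] using (continuous_exp.tendsto 0).comp h

lemma integrableOn_Iic_gumbelPDFReal (hA : 0 < A) (b : ℝ) :
    IntegrableOn (gumbelPDFReal A) (Iic b) := by
  have hint (a : ℝ) :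
      ∫ t in a..b, ‖gumbelPDFReal A t‖ = exp (-A * exp (-b)) - exp (-A * exp (-a)) := by
    simp_rw [norm_of_nonneg (gumbelPDFReal_nonneg hA.le _)]
    exact intervalIntegral.integral_eq_sub_of_hasDerivAt
      (fun t _ => hasDerivAt_exp_neg_mul_exp_neg A t)
      ((continuous_gumbelPDFReal A).intervalIntegrable _ _)
  refine integrableOn_Iic_of_intervalIntegral_norm_tendsto (exp (-A * exp (-b))) b
    (fun _ => (continuous_gumbelPDFReal A).integrableOn_Ioc) tendsto_id ?_
  simp_rw [hint]
  simpa using (tendsto_exp_neg_mul_exp_neg_atBot hA).const_sub (exp (-A * exp (-b)))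

lemma integrable_gumbelPDFReal (hA : 0 < A) : Integrable (gumbelPDFReal A) := by
  rw [← integrableOn_univ, ← Iic_union_Ioi (a := 0), integrableOn_union]
  exact ⟨integrableOn_Iic_gumbelPDFReal hA 0, integrableOn_Ioi_deriv_of_nonneg'
    (fun t _ => hasDerivAt_exp_neg_mul_exp_neg A t) (fun t _ => gumbelPDFReal_nonneg hA.le t)
    (tendsto_exp_neg_mul_exp_neg_atTop A)⟩

lemma lintegral_Iic_gumbelPDFReal (hA : 0 < A) (b : ℝ) :
    ∫⁻ t in Iic b, ENNReal.ofReal (gumbelPDFReal A t) = ENNReal.ofReal (exp (-A * exp (-b))) := by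
  rw [← ofReal_integral_eq_lintegral_ofReal (integrableOn_Iic_gumbelPDFReal hA b)
    (ae_of_all _ (gumbelPDFReal_nonneg hA.le)),
    integral_Iic_of_hasDerivAt_of_tendsto' (fun t _ => hasDerivAt_exp_neg_mul_exp_neg A t)
      (integrableOn_Iic_gumbelPDFReal hA b) (tendsto_exp_neg_mul_exp_neg_atBot hA), sub_zero]

lemma lintegral_gumbelPDFReal (hA : 0 < A) : ∫⁻ t, ENNReal.ofReal (gumbelPDFReal A t) = 1 := by
  rw [← ofReal_integral_eq_lintegral_ofReal (integrable_gumbelPDFReal hA)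
    (ae_of_all _ (gumbelPDFReal_nonneg hA.le)),
    integral_of_hasDerivAt_of_tendsto (fun t => hasDerivAt_exp_neg_mul_exp_neg A t)
      (integrable_gumbelPDFReal hA) (tendsto_exp_neg_mul_exp_neg_atBot hA)
      (tendsto_exp_neg_mul_exp_neg_atTop A), sub_zero, ENNReal.ofReal_one]

end GumbelDensity

noncomputable def gumbelMeasure : Measure ℝ :=
  volume.withDensity fun t => ENNReal.ofReal (gumbelPDFReal 1 t)

lemma gumbelMeasure_Iic (b : ℝ) : gumbelMeasure (Iic b) = ENNReal.ofReal (exp (-exp (-b))) := by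
  rw [gumbelMeasure, withDensity_apply _ measurableSet_Iic, lintegral_Iic_gumbelPDFReal one_pos,
    neg_one_mul]

instance : IsProbabilityMeasure gumbelMeasure :=
  ⟨by rw [gumbelMeasure, withDensity_apply _ .univ, Measure.restrict_univ,
    lintegral_gumbelPDFReal one_pos]⟩

lemma map_eq_gumbelMeasure {Ω : Type*} [MeasurableSpace Ω] {μ : Measure Ω}
    [IsProbabilityMeasure μ] {X : Ω → ℝ} (hX : Measurable X)
    (hcdf : ∀ t, μ {ω | X ω ≤ t} = ENNReal.ofReal (exp (-exp (-t)))) :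
    μ.map X = gumbelMeasure := by
  have := Measure.isProbabilityMeasure_map (μ := μ) hX.aemeasurable
  refine Measure.ext_of_Iic _ _ fun t => ?_
  rw [Measure.map_apply hX measurableSet_Iic, gumbelMeasure_Iic]
  exact hcdf t

lemma prod_gumbelMeasure_Iic {ι : Type*} [Fintype ι] (t : ℝ) (c : ι → ℝ) :
    ∏ k, gumbelMeasure (Iic (t + c k)) = ENNReal.ofReal (exp (-(∑ k, exp (-c k)) * exp (-t))) := by
  simp_rw [gumbelMeasure_Iic]
  rw [← ENNReal.ofReal_prod_of_nonneg fun _ _ => (exp_pos _).le, ← exp_sum, neg_mul, Finset.sum_mul,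
    ← Finset.sum_neg_distrib]
  simp_rw [← exp_add, neg_add, add_comm (-t)]

lemma lintegral_exp_neg_mul_exp_neg_gumbelMeasure {S : ℝ} (hS : 0 ≤ S) :
    ∫⁻ t, ENNReal.ofReal (exp (-S * exp (-t))) ∂gumbelMeasure = ENNReal.ofReal (1 / (1 + S)) := by
  have hpdf (t : ℝ) : ENNReal.ofReal (gumbelPDFReal 1 t) * ENNReal.ofReal (exp (-S * exp (-t))) =
      ENNReal.ofReal (1 / (1 + S)) * ENNReal.ofReal (gumbelPDFReal (1 + S) t) := by
    rw [← ENNReal.ofReal_mul (gumbelPDFReal_nonneg zero_le_one t),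
      ← ENNReal.ofReal_mul (by positivity)]
    congr 1
    simp only [gumbelPDFReal]
    field_simp
    rw [← exp_add]
    ring_nf
  rw [gumbelMeasure, lintegral_withDensity_eq_lintegral_mul _ (by fun_prop) (by fun_prop)]
  simp only [Pi.mul_apply, hpdf]
  rw [lintegral_const_mul _ (by fun_prop), lintegral_gumbelPDFReal (by linarith), mul_one]

lemma measurableSet_setOf_succAbove_le_add {m : ℕ} (i : Fin (m + 1)) (c : Fin m → ℝ) :
    MeasurableSet {g : Fin (m + 1) → ℝ | ∀ k, g (i.succAbove k) ≤ g i + c k} := by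
  simp only [ofPred_forall]
  exact .iInter fun k => measurableSet_le (by fun_prop) (by fun_prop)

lemma pi_setOf_succAbove_le_add {m : ℕ} (μ : Fin (m + 1) → Measure ℝ) [∀ j, SigmaFinite (μ j)]
    (i : Fin (m + 1)) (c : Fin m → ℝ) :
    Measure.pi μ {g | ∀ k, g (i.succAbove k) ≤ g i + c k} =
      ∫⁻ t, ∏ k, μ (i.succAbove k) (Iic (t + c k)) ∂μ i := by
  let T : Set (ℝ × (Fin m → ℝ)) := {p | ∀ k, p.2 k ≤ p.1 + c k}
  have hT : MeasurableSet T := by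
    simp only [T, ofPred_forall]
    exact .iInter fun k => measurableSet_le (by fun_prop) (by fun_prop)
  have hsection (t : ℝ) : Prod.mk t ⁻¹' T = univ.pi fun k => Iic (t + c k) := by
    ext; simp [T, Pi.le_def]
  change Measure.pi μ (MeasurableEquiv.piFinSuccAbove (fun _ => ℝ) i ⁻¹' T) = _
  rw [(measurePreserving_piFinSuccAbove μ i).measure_preimage hT.nullMeasurableSet,
    Measure.prod_apply hT]
  simp_rw [hsection, Measure.pi_pi]

theorem gumbel_max_trick_general {Ω : Type*} [MeasurableSpace Ω] (μ : Measure Ω)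
    [IsProbabilityMeasure μ] {n : ℕ} (x : Fin n → ℝ) (G : Fin n → Ω → ℝ)
    (hmeas : ∀ i, Measurable (G i))
    (hindep : iIndepFun G μ)
    (hcdf : ∀ i t, μ {ω | G i ω ≤ t} = ENNReal.ofReal (Real.exp (-Real.exp (-t))))
    (i : Fin n) :
    μ {ω | ∀ j, x j + G j ω ≤ x i + G i ω} =
      ENNReal.ofReal (Real.exp (x i) / ∑ j, Real.exp (x j)) := by
  obtain ⟨m, rfl⟩ : ∃ m, n = m + 1 := Nat.exists_eq_add_one.mpr i.pos
  have hlaw : μ.map (fun ω j => G j ω) = Measure.pi fun _ => gumbelMeasure := by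
    rw [hindep.map_fun_eq_pi_map fun j => (hmeas j).aemeasurable]
    simp_rw [map_eq_gumbelMeasure (hmeas _) (hcdf _)]
  have hevent : {ω | ∀ j, x j + G j ω ≤ x i + G i ω} = (fun ω j => G j ω) ⁻¹'
      {g | ∀ k, g (i.succAbove k) ≤ g i + (x i - x (i.succAbove k))} := by
    ext ω
    simp only [i.forall_iff_succAbove, le_refl, true_and, mem_ofPred_eq, mem_preimage]
    refine forall_congr' fun k => ?_
    constructor <;> intro h <;> linarith
  have hsum : ∑ j, exp (x j) = exp (x i) * (1 + ∑ k, exp (-(x i - x (i.succAbove k)))) := by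
    simp_rw [Fin.sum_univ_succAbove _ i, mul_add, Finset.mul_sum, ← exp_add]
    ring_nf
  rw [hevent, ← Measure.map_apply (measurable_pi_lambda _ hmeas)
      (measurableSet_setOf_succAbove_le_add i _), hlaw, pi_setOf_succAbove_le_add]
  simp_rw [prod_gumbelMeasure_Iic]
  rw [lintegral_exp_neg_mul_exp_neg_gumbelMeasure (by positivity), hsum,
    div_mul_eq_div_div, div_self (exp_pos _).ne']

/-- **The Gumbel-Max Trick.** If `G 1, ..., G n` are i.i.d. standard Gumbel random
variables (CDF `exp (-exp (-x))`), then the probability that index `i` attains the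
maximum of `x j + G j` equals `exp (x i) / ∑ j, exp (x j)`. -/
theorem gumbel_max_trick {Ω : Type*} [MeasurableSpace Ω] (μ : Measure Ω)
    [IsProbabilityMeasure μ] {n : ℕ} (hn : 0 < n) (x : Fin n → ℝ) (G : Fin n → Ω → ℝ)
    (hmeas : ∀ i, Measurable (G i))
    (hindep : iIndepFun G μ)
    (hcdf : ∀ i t, μ {ω | G i ω ≤ t} = ENNReal.ofReal (Real.exp (-Real.exp (-t))))
    (i : Fin n) :
    μ {ω | ∀ j, x j + G j ω ≤ x i + G i ω} =
      ENNReal.ofReal (Real.exp (x i) / ∑ j, Real.exp (x j)) :=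
  gumbel_max_trick_general μ x G hmeas hindep hcdf i
end

section
/- Let s be a score function with sensitivity Delta: for neighboring datasets D ~ D', |s(D,h) - s(D',h)| <= Delta for all candidates h. Then the exponential mechanism, which samples h with probability proportional to exp(epsilon * s(D,h) / (2*Delta)), is epsilon-differentially private: for neighboring D, D' and any candidate h, Pr[EM(D) = h] <= exp(epsilon) * Pr[EM(D') = h]. -/
open Real Finset

/-- The exponential mechanism, which outputs candidate `h` with probability proportional
to `exp (ε * s(D,h) / (2Δ))`, is `ε`-differentially private when the score function `s`
has global sensitivity at most `Δ`. -/
theorem exponential_mechanism_private {D R : Type*} [Fintype R] [Nonempty R]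
    (Neighbor : D → D → Prop) (s : D → R → ℝ) (Δ ε : ℝ) (hΔ : 0 < Δ) (hε : 0 < ε)
    (hsens : ∀ (h : R) (d d' : D), Neighbor d d' → |s d h - s d' h| ≤ Δ)
    (d d' : D) (hnb : Neighbor d d') (h : R) :
    Real.exp (ε * s d h / (2 * Δ)) / (∑ h' : R, Real.exp (ε * s d h' / (2 * Δ))) ≤
      Real.exp ε *
        (Real.exp (ε * s d' h / (2 * Δ)) /
          (∑ h' : R, Real.exp (ε * s d' h' / (2 * Δ)))) := by
  set SA := ∑ h' : R, Real.exp (ε * s d h' / (2 * Δ)) with hSA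
  set SB := ∑ h' : R, Real.exp (ε * s d' h' / (2 * Δ)) with hSB
  have hSApos : 0 < SA := Finset.sum_pos (fun i _ => Real.exp_pos _) univ_nonempty
  have hSBpos : 0 < SB := Finset.sum_pos (fun i _ => Real.exp_pos _) univ_nonempty
  have step : ∀ i : R, Real.exp (ε * s d i / (2 * Δ)) ≤
      Real.exp (ε/2) * Real.exp (ε * s d' i / (2 * Δ)) := by
    intro i
    rw [← Real.exp_add, Real.exp_le_exp]
    have hd : s d i - s d' i ≤ Δ := (abs_le.mp (hsens i d d' hnb)).2
    have h2Δ : (0:ℝ) < 2 * Δ := by linarith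
    rw [div_le_iff₀ h2Δ, add_mul, div_mul_cancel₀ _ h2Δ.ne']
    nlinarith
  have step' : ∀ i : R, Real.exp (ε * s d' i / (2 * Δ)) ≤
      Real.exp (ε/2) * Real.exp (ε * s d i / (2 * Δ)) := by
    intro i
    rw [← Real.exp_add, Real.exp_le_exp]
    have hd : s d' i - s d i ≤ Δ := by
      have := (abs_le.mp (hsens i d d' hnb)).1; linarith
    have h2Δ : (0:ℝ) < 2 * Δ := by linarith
    rw [div_le_iff₀ h2Δ, add_mul, div_mul_cancel₀ _ h2Δ.ne']
    nlinarith
  have hden : SB ≤ Real.exp (ε/2) * SA := by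
    rw [hSA, hSB, Finset.mul_sum]
    exact Finset.sum_le_sum fun i _ => step' i
  rw [div_le_iff₀ hSApos, mul_comm (Real.exp ε), mul_assoc, div_mul_eq_mul_div,
    le_div_iff₀ hSBpos]
  calc Real.exp (ε * s d h / (2 * Δ)) * SB
      ≤ (Real.exp (ε/2) * Real.exp (ε * s d' h / (2 * Δ))) * (Real.exp (ε/2) * SA) :=
        mul_le_mul (step h) hden hSBpos.le (by positivity)
    _ = Real.exp (ε * s d' h / (2 * Δ)) * (Real.exp ε * SA) := by
        rw [show Real.exp (ε/2) * Real.exp (ε * s d' h / (2 * Δ)) * (Real.exp (ε/2) * SA)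
          = (Real.exp (ε/2) * Real.exp (ε/2)) * (Real.exp (ε * s d' h / (2 * Δ)) * SA) by ring,
          ← Real.exp_add]
        ring_nf
end

section
/- Let the exponential mechanism select candidate h from a finite set R of size |R| with probability proportional to exp(epsilon * s(D,h)/(2*Delta)), and let s_max = max_{h in R} s(D,h). Then for any t > 0, Pr[s(D, output) < s_max - 2*Delta*(ln|R| + t)/epsilon] <= exp(-t). -/
open Real Finset Classical

/-! Every candidate scoring below `s_max - c` has weight at most `exp (β (s_max - c))`, with
`β = ε / (2Δ)`, while the normalizer is at least the weight `exp (β s_max)` of a maximizer. So the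
bad candidates carry mass at most `|R| exp (-β c)`, and `β c = ln |R| + t` by the choice of `c`. -/

section GibbsTail

variable {R : Type*} (s : R → ℝ) {β : ℝ}

lemma sum_filter_lt_exp_mul_le (S : Finset R) (hβ : 0 ≤ β) (a : ℝ) :
    ∑ h ∈ S.filter (fun h => s h < a), exp (β * s h) ≤ #S * exp (β * a) :=
  calc ∑ h ∈ S.filter (fun h => s h < a), exp (β * s h)
      ≤ #(S.filter fun h => s h < a) • exp (β * a) :=
        sum_le_card_nsmul _ _ _ fun h hh => by
          gcongr; exact (mem_filter.1 hh).2.le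
    _ ≤ #S * exp (β * a) := by rw [nsmul_eq_mul]; gcongr; exact filter_subset _ _

variable [Fintype R] [Nonempty R]

lemma exp_mul_iSup_le_sum_exp_mul (hβ : 0 ≤ β) :
    exp (β * ⨆ h, s h) ≤ ∑ h, exp (β * s h) := by
  obtain ⟨h₀, hh₀⟩ := Finite.exists_max s
  calc exp (β * ⨆ h, s h) ≤ exp (β * s h₀) := by gcongr; exact ciSup_le hh₀
    _ ≤ ∑ h, exp (β * s h) :=
        single_le_sum (f := fun h => exp (β * s h)) (fun h _ => (exp_pos _).le) (mem_univ h₀)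

theorem sum_exp_mul_filter_lt_iSup_sub_div_le (hβ : 0 ≤ β) (c : ℝ) :
    (∑ h ∈ univ.filter (fun h => s h < (⨆ h', s h') - c), exp (β * s h)) /
      ∑ h, exp (β * s h) ≤ Fintype.card R * exp (-(β * c)) := by
  have hZ := exp_mul_iSup_le_sum_exp_mul s hβ
  rw [div_le_iff₀ ((exp_pos _).trans_le hZ)]
  calc _ ≤ Fintype.card R * exp (β * ((⨆ h', s h') - c)) :=
        sum_filter_lt_exp_mul_le s univ hβ _
    _ = Fintype.card R * exp (-(β * c)) * exp (β * ⨆ h', s h') := by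
        rw [mul_sub, sub_eq_neg_add, exp_add]; ring
    _ ≤ _ := by gcongr

end GibbsTail

theorem exponential_mechanism_utility_general {R : Type*} [Fintype R] [Nonempty R]
    (s : R → ℝ) (Δ ε t : ℝ) (hΔ : 0 < Δ) (hε : 0 < ε) :
    (∑ h ∈ Finset.univ.filter
        (fun h : R =>
          s h < (⨆ h' : R, s h') - 2 * Δ * (Real.log (Fintype.card R) + t) / ε),
        Real.exp (ε * s h / (2 * Δ))) /
      (∑ h : R, Real.exp (ε * s h / (2 * Δ))) ≤ Real.exp (-t) := by
  have hβ : 0 ≤ ε / (2 * Δ) := by positivity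
  have hcard : (0 : ℝ) < Fintype.card R := by exact_mod_cast Fintype.card_pos
  have hβc : ε / (2 * Δ) * (2 * Δ * (log (Fintype.card R) + t) / ε) =
      log (Fintype.card R) + t := by
    field_simp
  simp_rw [mul_div_right_comm ε]
  refine (sum_exp_mul_filter_lt_iSup_sub_div_le s hβ _).trans_eq ?_
  rw [hβc, neg_add, exp_add, exp_neg (log _), exp_log hcard]
  field_simp

/-- Utility of the exponential mechanism: the probability (under the distribution with
`Pr[h] ∝ exp (ε s(D,h) / (2Δ))`) of outputting a candidate whose score is below
`s_max - 2Δ(ln |R| + t)/ε` is at most `exp (-t)`. -/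
theorem exponential_mechanism_utility {R : Type*} [Fintype R] [Nonempty R]
    (s : R → ℝ) (Δ ε t : ℝ) (hΔ : 0 < Δ) (hε : 0 < ε) (ht : 0 < t) :
    (∑ h ∈ Finset.univ.filter
        (fun h : R =>
          s h < (⨆ h' : R, s h') - 2 * Δ * (Real.log (Fintype.card R) + t) / ε),
        Real.exp (ε * s h / (2 * Δ))) /
      (∑ h : R, Real.exp (ε * s h / (2 * Δ))) ≤ Real.exp (-t) :=
  exponential_mechanism_utility_general s Δ ε t hΔ hε
end

section
/- Let A be a measure (nonnegative weight vector) on a finite set, and let Gamma_s A be its Bregman (KL) projection onto the set of 1/s-dense distributions. Then the projection has the closed form (Gamma_s A)_a = (1/s) * min{1, c*A_a}, where c > 0 is chosen such that sum_a min{1, c*A_a} = s. -/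
open Real Finset

lemma add_sub_mul_log_div_add_one_le {x y A : ℝ} (hx : 0 ≤ x) (hy : 0 < y) (hA : 0 < A) :
    y * log (y / A) + (x - y) * (log (y / A) + 1) ≤ x * log (x / A) := by
  rcases hx.eq_or_lt with rfl | hx
  · simp only [zero_sub, zero_div, log_zero, mul_zero]
    linarith
  · have hsplit : log (x / A) = log (x / y) + log (y / A) := by
      rw [← log_mul (by positivity) (by positivity), div_mul_div_cancel₀ hy.ne']
    have hlog : x * (1 - (x / y)⁻¹) ≤ x * log (x / y) :=
      mul_le_mul_of_nonneg_left (one_sub_inv_le_log_of_pos (by positivity)) hx.le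
    rw [inv_div, mul_sub, mul_one, mul_div_cancel₀ _ hx.ne'] at hlog
    rw [hsplit]
    linarith

/-- Sufficiency of the KKT condition, `ℓ` being the multiplier of the mass constraint: as
`∑ a, (P a - Q a) = 0`, the tangent lines at `Q` bound the objective at `P` from below. -/
theorem sum_mul_log_div_le_of_forall_sub_mul_le {ι : Type*} [Fintype ι] {A P Q : ι → ℝ}
    {ℓ : ℝ} (hA : ∀ a, 0 < A a) (hQ : ∀ a, 0 < Q a) (hP : ∀ a, 0 ≤ P a)
    (hsum : ∑ a, P a = ∑ a, Q a)
    (hℓ : ∀ a, (P a - Q a) * ℓ ≤ (P a - Q a) * log (Q a / A a)) :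
    ∑ a, Q a * log (Q a / A a) ≤ ∑ a, P a * log (P a / A a) := by
  have hshift : ∑ a, (P a - Q a) * (ℓ + 1) = 0 := by
    rw [← sum_mul, sum_sub_distrib, hsum, sub_self, zero_mul]
  calc ∑ a, Q a * log (Q a / A a)
      = ∑ a, (Q a * log (Q a / A a) + (P a - Q a) * (ℓ + 1)) := by
        rw [sum_add_distrib, hshift, add_zero]
    _ ≤ ∑ a, (Q a * log (Q a / A a) + (P a - Q a) * (log (Q a / A a) + 1)) :=
        sum_le_sum fun a _ => by linarith [hℓ a]
    _ ≤ ∑ a, P a * log (P a / A a) :=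
        sum_le_sum fun a _ => add_sub_mul_log_div_add_one_le (hP a) (hQ a) (hA a)

/-- The KKT condition at a capped coordinate, with multiplier `log (c / s)`: where the cap is
inactive `q / a = c / s`; where it is active `q / a ≤ c / s`, while `p ≤ 1 / s = q`. -/
lemma sub_mul_log_le_sub_mul_log_min_div {p a c s : ℝ} (ha : 0 < a) (hc : 0 < c) (hs : 0 < s)
    (hp : p ≤ 1 / s) :
    (p - 1 / s * min 1 (c * a)) * log (c / s) ≤
      (p - 1 / s * min 1 (c * a)) * log (1 / s * min 1 (c * a) / a) := by
  rcases le_total (c * a) 1 with hca | hca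
  · rw [min_eq_right hca]
    apply le_of_eq
    congr 2
    field_simp
  · rw [min_eq_left hca, mul_one]
    have hratio : 1 / s / a ≤ c / s := by
      rw [div_right_comm]
      gcongr
      rwa [div_le_iff₀ ha]
    exact mul_le_mul_of_nonpos_left (log_le_log (by positivity) hratio) (by linarith)

theorem bregman_projection_closed_form_general {n : ℕ} (A : Fin n → ℝ) (hA : ∀ a, 0 < A a)
    (s : ℝ) (hs : 1 ≤ s) (c : ℝ) (hc : 0 < c)
    (hcs : ∑ a : Fin n, min 1 (c * A a) = s) :
    (∀ a : Fin n, 0 ≤ (1 / s) * min 1 (c * A a)) ∧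
    (∀ a : Fin n, (1 / s) * min 1 (c * A a) ≤ 1 / s) ∧
    (∑ a : Fin n, (1 / s) * min 1 (c * A a)) = 1 ∧
    ∀ P : Fin n → ℝ, (∀ a, 0 ≤ P a) → (∀ a, P a ≤ 1 / s) →
      (∑ a : Fin n, P a) = 1 →
      (∑ a : Fin n, (1 / s) * min 1 (c * A a) *
          Real.log ((1 / s) * min 1 (c * A a) / A a)) ≤
        ∑ a : Fin n, P a * Real.log (P a / A a) := by
  have hs0 : 0 < s := by linarith
  have hpos : ∀ a, 0 < 1 / s * min 1 (c * A a) := fun a =>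
    mul_pos (by positivity) (lt_min one_pos (mul_pos hc (hA a)))
  have hmass : ∑ a, 1 / s * min 1 (c * A a) = 1 := by
    rw [← mul_sum, hcs, one_div_mul_cancel hs0.ne']
  refine ⟨fun a => (hpos a).le, fun a => ?_, hmass, fun P hP0 hPs hP1 => ?_⟩
  · exact mul_le_of_le_one_right (by positivity) (min_le_left _ _)
  · exact sum_mul_log_div_le_of_forall_sub_mul_le hA hpos hP0 (hP1.trans hmass.symm)
      fun a => sub_mul_log_le_sub_mul_log_min_div (hA a) hc hs0 (hPs a)

/-- Closed form of the Bregman (KL) projection onto `1/s`-dense distributions: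
if `c > 0` satisfies `∑ a, min 1 (c * A a) = s`, then the vector
`P* a = (1/s) * min 1 (c * A a)` is a `1/s`-dense distribution minimizing
`∑ a, P a * ln (P a / A a)` over all `1/s`-dense distributions `P`. -/
theorem bregman_projection_closed_form {n : ℕ} (A : Fin n → ℝ) (hA : ∀ a, 0 < A a)
    (s : ℝ) (hs : 1 ≤ s) (hsn : s ≤ n) (c : ℝ) (hc : 0 < c)
    (hcs : ∑ a : Fin n, min 1 (c * A a) = s) :
    (∀ a : Fin n, 0 ≤ (1 / s) * min 1 (c * A a)) ∧
    (∀ a : Fin n, (1 / s) * min 1 (c * A a) ≤ 1 / s) ∧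
    (∑ a : Fin n, (1 / s) * min 1 (c * A a)) = 1 ∧
    ∀ P : Fin n → ℝ, (∀ a, 0 ≤ P a) → (∀ a, P a ≤ 1 / s) →
      (∑ a : Fin n, P a) = 1 →
      (∑ a : Fin n, (1 / s) * min 1 (c * A a) *
          Real.log ((1 / s) * min 1 (c * A a) / A a)) ≤
        ∑ a : Fin n, P a * Real.log (P a / A a) :=
  bregman_projection_closed_form_general A hA s hs c hc hcs
end

section
/- Let I be the exact lazy Gumbel sampler and I' the sampler using a c-approximate top-k set S on scores X = {x_1,...,x_n}. Then for every index i in [n], exp(-c) * exp(x_i)/sum_j exp(x_j) <= Pr[I'(X,S) = i] <= exp(c) * exp(x_i)/sum_j exp(x_j). -/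
/-!
Gumbel-max trick: for independent standard Gumbel noise `G` and any offsets `d`, the index `i`
is the strict argmax of `d j + G j` with probability `exp (d i) / ∑ j, exp (d j)`; conditionally
on `G i = t` the other indices lose independently, and the resulting integral against the Gumbel
density is again a Gumbel density.

The lazy sampler outputs `i` whenever `i` beats every other index by the margin `c`: then either
`i ∈ S`, or `x i - c ≤ min_S x` by the approximation property and `i` clears the threshold `B`.
Conversely, if it outputs `i`, no index beats `i` by more than `c`: an index that was not
sampled has noise below `B`, and `B` is at most the winning score minus `min_S x`. Shifting `x i`
by `∓c` in the Gumbel-max formula moves the softmax probability by a factor of at most `exp c`.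
-/

open MeasureTheory ProbabilityTheory Real Finset
open Set Filter Topology

namespace ProbabilityTheory

noncomputable def gumbelCDFReal (K s : ℝ) : ℝ := exp (-K * exp (-s))

/-- The density of the Gumbel law with location `log K`. -/
noncomputable def gumbelPDFReal (K s : ℝ) : ℝ := K * exp (-s) * exp (-K * exp (-s))

lemma gumbelPDFReal_nonneg {K : ℝ} (hK : 0 ≤ K) (s : ℝ) : 0 ≤ gumbelPDFReal K s := by
  unfold gumbelPDFReal; positivity

lemma continuous_gumbelPDFReal (K : ℝ) : Continuous (gumbelPDFReal K) := by
  unfold gumbelPDFReal; fun_prop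

lemma hasDerivAt_gumbelCDFReal (K s : ℝ) :
    HasDerivAt (gumbelCDFReal K) (gumbelPDFReal K s) s := by
  convert ((hasDerivAt_neg s).exp.const_mul (-K)).exp using 1
  · rfl
  · simp only [gumbelPDFReal]
    ring

lemma tendsto_gumbelCDFReal_atBot {K : ℝ} (hK : 0 < K) :
    Tendsto (gumbelCDFReal K) atBot (𝓝 0) :=
  tendsto_exp_atBot.comp <| (tendsto_exp_atTop.comp tendsto_neg_atBot_atTop).const_mul_atTop_of_neg
    (neg_lt_zero.mpr hK)

lemma tendsto_gumbelCDFReal_atTop (K : ℝ) : Tendsto (gumbelCDFReal K) atTop (𝓝 1) := by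
  have : Tendsto (fun s => -K * exp (-s)) atTop (𝓝 0) := by
    simpa using (tendsto_exp_atBot.comp tendsto_neg_atTop_atBot).const_mul (-K)
  unfold gumbelCDFReal
  simpa [Function.comp_def] using (continuous_exp.tendsto 0).comp this

lemma integrable_gumbelPDFReal {K : ℝ} (hK : 0 ≤ K) : Integrable (gumbelPDFReal K) := by
  refine integrable_of_intervalIntegral_norm_bounded 1
    (fun _ => (continuous_gumbelPDFReal K).integrableOn_Ioc) tendsto_neg_atTop_atBot tendsto_id
    (Eventually.of_forall fun r => ?_)
  simp_rw [Real.norm_of_nonneg (gumbelPDFReal_nonneg hK _)]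
  rw [intervalIntegral.integral_eq_sub_of_hasDerivAt (fun s _ => hasDerivAt_gumbelCDFReal K s)
    ((continuous_gumbelPDFReal K).intervalIntegrable _ _)]
  have h_le_one : gumbelCDFReal K r ≤ 1 := exp_le_one_iff.mpr (by nlinarith [exp_pos (-r)])
  have h_nonneg : 0 ≤ gumbelCDFReal K (-r) := (exp_pos _).le
  simp only [id]
  linarith

lemma lintegral_gumbelPDFReal {K : ℝ} (hK : 0 < K) :
    ∫⁻ s, ENNReal.ofReal (gumbelPDFReal K s) = 1 := by
  rw [← ofReal_integral_eq_lintegral_ofReal (integrable_gumbelPDFReal hK.le)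
    (ae_of_all _ (gumbelPDFReal_nonneg hK.le)),
    integral_of_hasDerivAt_of_tendsto (hasDerivAt_gumbelCDFReal K) (integrable_gumbelPDFReal hK.le)
      (tendsto_gumbelCDFReal_atBot hK) (tendsto_gumbelCDFReal_atTop K), sub_zero,
    ENNReal.ofReal_one]

lemma setLIntegral_gumbelPDFReal_Iic {K : ℝ} (hK : 0 < K) (t : ℝ) :
    ∫⁻ s in Iic t, ENNReal.ofReal (gumbelPDFReal K s) = ENNReal.ofReal (gumbelCDFReal K t) := by
  rw [← ofReal_integral_eq_lintegral_ofReal (integrable_gumbelPDFReal hK.le).integrableOn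
    (ae_of_all _ (gumbelPDFReal_nonneg hK.le)),
    integral_Iic_of_hasDerivAt_of_tendsto' (fun s _ => hasDerivAt_gumbelCDFReal K s)
      (integrable_gumbelPDFReal hK.le).integrableOn (tendsto_gumbelCDFReal_atBot hK), sub_zero]

noncomputable def gumbel : Measure ℝ :=
  volume.withDensity fun s => ENNReal.ofReal (gumbelPDFReal 1 s)

instance : IsProbabilityMeasure gumbel :=
  ⟨by rw [gumbel, withDensity_apply _ MeasurableSet.univ, Measure.restrict_univ,
    lintegral_gumbelPDFReal one_pos]⟩

instance : NullSingletonClass gumbel := by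
  unfold gumbel; infer_instance

lemma gumbel_Iic (t : ℝ) : gumbel (Iic t) = ENNReal.ofReal (exp (-exp (-t))) := by
  rw [gumbel, withDensity_apply _ measurableSet_Iic, setLIntegral_gumbelPDFReal_Iic one_pos,
    gumbelCDFReal, neg_one_mul]

lemma gumbel_Iio (t : ℝ) : gumbel (Iio t) = ENNReal.ofReal (exp (-exp (-t))) := by
  rw [measure_congr Iio_ae_eq_Iic, gumbel_Iic]

lemma lintegral_gumbel_exp_neg_mul_exp_neg {a : ℝ} (ha : 0 ≤ a) :
    ∫⁻ t, ENNReal.ofReal (exp (-a * exp (-t))) ∂gumbel = ENNReal.ofReal (1 + a)⁻¹ := by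
  have hdensity : ∀ t, ENNReal.ofReal (gumbelPDFReal 1 t) * ENNReal.ofReal (exp (-a * exp (-t)))
      = ENNReal.ofReal (gumbelPDFReal (1 + a) t) * ENNReal.ofReal (1 + a)⁻¹ := by
    intro t
    rw [← ENNReal.ofReal_mul (gumbelPDFReal_nonneg zero_le_one t),
      ← ENNReal.ofReal_mul (gumbelPDFReal_nonneg (by linarith) t)]
    congr 1
    simp only [gumbelPDFReal]
    rw [show -(1 + a) * exp (-t) = -1 * exp (-t) + -a * exp (-t) by ring, exp_add]
    field_simp
  rw [gumbel, lintegral_withDensity_eq_lintegral_mul _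
    (continuous_gumbelPDFReal 1).measurable.ennreal_ofReal (by fun_prop)]
  simp_rw [Pi.mul_apply, hdensity]
  rw [lintegral_mul_const _ (continuous_gumbelPDFReal _).measurable.ennreal_ofReal,
    lintegral_gumbelPDFReal (by linarith), one_mul]

variable {ι : Type*} [Fintype ι] [DecidableEq ι]

lemma pi_setOf_forall_ne_lt_add (ν : Measure ℝ) [SigmaFinite ν] (i : ι) (a : ι → ℝ) :
    Measure.pi (fun _ : ι => ν) {y | ∀ j ≠ i, y j < y i + a j} =
      ∫⁻ t, ∏ j : {j // j ≠ i}, ν (Iio (t + a j)) ∂ν := by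
  let T : Set (({j // j = i} → ℝ) × ({j // j ≠ i} → ℝ)) :=
    {z | ∀ j, z.2 j < z.1 default + a j}
  have hT : MeasurableSet T := by
    simp only [T, Set.ofPred_forall]
    exact .iInter fun j => measurableSet_lt (by fun_prop) (by fun_prop)
  have hpreimage : {y | ∀ j ≠ i, y j < y i + a j} =
      MeasurableEquiv.piEquivPiSubtypeProd (fun _ : ι => ℝ) (· = i) ⁻¹' T := by
    ext y
    simp only [T, mem_ofPred_eq, preimage_ofPred_eq, MeasurableEquiv.piEquivPiSubtypeProd,
      MeasurableEquiv.coe_mk, Equiv.piEquivPiSubtypeProd_apply, Subtype.forall]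
    rfl
  have hsection : ∀ u, Prod.mk u ⁻¹' T =
      Set.univ.pi fun j : {j // j ≠ i} => Iio (u default + a j) := by
    intro u
    ext v
    simp [T]
  rw [hpreimage, (measurePreserving_piEquivPiSubtypeProd _ _).measure_preimage hT.nullMeasurableSet,
    Measure.prod_apply hT]
  simp_rw [hsection, Measure.pi_pi]
  convert (measurePreserving_piUnique fun _ : {j // j = i} => ν).lintegral_comp_emb
    (MeasurableEquiv.measurableEmbedding _) fun t => ∏ j : {j // j ≠ i}, ν (Iio (t + a j))
  rfl

lemma pi_gumbel_setOf_forall_ne_add_lt_add (i : ι) (d : ι → ℝ) :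
    Measure.pi (fun _ : ι => gumbel) {y | ∀ j ≠ i, y j + d j < y i + d i} =
      ENNReal.ofReal (exp (d i) / ∑ j, exp (d j)) := by
  set a : ℝ := ∑ j : {j // j ≠ i}, exp (d j - d i)
  have ha : 0 ≤ a := sum_nonneg fun _ _ => (exp_pos _).le
  have hprod : ∀ t, ∏ j : {j // j ≠ i}, gumbel (Iio (t + (d i - d j))) =
      ENNReal.ofReal (exp (-a * exp (-t))) := by
    intro t
    simp_rw [gumbel_Iio]
    rw [← ENNReal.ofReal_prod_of_nonneg fun _ _ => (exp_pos _).le, ← exp_sum, neg_mul, sum_mul,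
      ← sum_neg_distrib]
    congr 2
    refine sum_congr rfl fun j _ => ?_
    rw [← exp_add]
    ring_nf
  have hsum : ∑ j, exp (d j) = exp (d i) * (1 + a) := by
    rw [Fintype.sum_eq_add_sum_subtype_ne _ i, mul_add, mul_one, mul_sum]
    congr 1
    refine sum_congr rfl fun j _ => ?_
    rw [← exp_add]
    ring_nf
  calc Measure.pi (fun _ : ι => gumbel) {y | ∀ j ≠ i, y j + d j < y i + d i}
      = Measure.pi (fun _ : ι => gumbel) {y | ∀ j ≠ i, y j < y i + (d i - d j)} := by
        congr 1
        ext y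
        refine forall₂_congr fun j _ => ?_
        constructor <;> intro <;> linarith
    _ = ENNReal.ofReal (1 + a)⁻¹ := by
        rw [pi_setOf_forall_ne_lt_add]
        simp_rw [hprod]
        exact lintegral_gumbel_exp_neg_mul_exp_neg ha
    _ = ENNReal.ofReal (exp (d i) / ∑ j, exp (d j)) := by
        rw [hsum, div_mul_cancel_left₀ (exp_ne_zero _)]

variable {Ω : Type*} [MeasurableSpace Ω] {μ : Measure Ω}

lemma map_eq_gumbel [IsFiniteMeasure μ] {X : Ω → ℝ} (hX : Measurable X)
    (hcdf : ∀ t, μ {ω | X ω ≤ t} = ENNReal.ofReal (exp (-exp (-t)))) : μ.map X = gumbel :=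
  Measure.ext_of_Iic _ _ fun t => by
    rw [Measure.map_apply hX measurableSet_Iic, gumbel_Iic]
    exact hcdf t

lemma measure_forall_ne_add_lt_add_of_gumbel {G : ι → Ω → ℝ}
    (hmeas : ∀ j, Measurable (G j)) (hindep : iIndepFun G μ)
    (hcdf : ∀ j t, μ {ω | G j ω ≤ t} = ENNReal.ofReal (exp (-exp (-t))))
    (i : ι) (d : ι → ℝ) :
    μ {ω | ∀ j ≠ i, G j ω + d j < G i ω + d i} =
      ENNReal.ofReal (exp (d i) / ∑ j, exp (d j)) := by
  have := hindep.isProbabilityMeasure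
  have hlaw : μ.map (fun ω j => G j ω) = Measure.pi fun _ => gumbel := by
    rw [hindep.map_fun_eq_pi_map fun j => (hmeas j).aemeasurable]
    simp_rw [map_eq_gumbel (hmeas _) (hcdf _)]
  have hmeasurableSet : MeasurableSet {y : ι → ℝ | ∀ j ≠ i, y j + d j < y i + d i} := by
    simp only [Set.ofPred_forall]
    exact .iInter fun j => .iInter fun _ => measurableSet_lt (by fun_prop) (by fun_prop)
  rw [← pi_gumbel_setOf_forall_ne_add_lt_add, ← hlaw,
    Measure.map_apply (measurable_pi_lambda _ hmeas) hmeasurableSet]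
  rfl

end ProbabilityTheory

namespace LazyGumbel

variable {ι : Type*} (S : Finset ι) (hS : S.Nonempty) (x : ι → ℝ)

/-- The indices the lazy sampler `I'` looks at when the Gumbel noise is `g`: those of `S`, and
those whose noise exceeds the threshold `B`. -/
def Eligible (g : ι → ℝ) (j : ι) : Prop :=
  j ∈ S ∨ S.sup' hS (fun l => x l + g l) - S.inf' hS x < g j

def Outputs (g : ι → ℝ) (i : ι) : Prop :=
  Eligible S hS x g i ∧ ∀ j, Eligible S hS x g j → j ≠ i → x j + g j < x i + g i

variable {S hS x} {c : ℝ} {g : ι → ℝ} {i : ι}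

lemma outputs_of_forall_add_lt (hc : 0 ≤ c) (happrox : ∀ i ∉ S, ∀ j ∈ S, x i - x j ≤ c)
    (hmargin : ∀ j ≠ i, x j + g j < x i + g i - c) : Outputs S hS x g i := by
  refine ⟨?_, fun j _ hj => by linarith [hmargin j hj]⟩
  by_cases hiS : i ∈ S
  · exact Or.inl hiS
  · have hinf : x i - c ≤ S.inf' hS x := le_inf' _ _ fun j hj => by linarith [happrox i hiS j hj]
    have hsup : S.sup' hS (fun l => x l + g l) < g i + S.inf' hS x :=
      (sup'_lt_iff _).mpr fun j hj => by linarith [hmargin j (ne_of_mem_of_not_mem hj hiS)]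
    exact Or.inr (by linarith)

lemma add_le_add_add_of_outputs (hc : 0 ≤ c) (happrox : ∀ i ∉ S, ∀ j ∈ S, x i - x j ≤ c)
    (hout : Outputs S hS x g i) {j : ι} (hj : j ≠ i) : x j + g j ≤ x i + g i + c := by
  obtain ⟨-, hwins⟩ := hout
  by_cases hjel : Eligible S hS x g j
  · linarith [hwins j hjel hj]
  · obtain ⟨hjS, hjB⟩ := not_or.mp hjel
    have hsup : S.sup' hS (fun l => x l + g l) ≤ x i + g i := sup'_le _ _ fun l hl => by
      rcases eq_or_ne l i with rfl | hli
      · rfl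
      · exact (hwins l (Or.inl hl) hli).le
    have hinf : x j - c ≤ S.inf' hS x := le_inf' _ _ fun l hl => by linarith [happrox j hjS l hl]
    linarith [not_lt.mp hjB]

variable [Fintype ι] [DecidableEq ι] {Ω : Type*} [MeasurableSpace Ω] {μ : Measure Ω}
  {G : ι → Ω → ℝ}

lemma ofReal_exp_neg_mul_le_measure_outputs (hmeas : ∀ j, Measurable (G j))
    (hindep : iIndepFun G μ)
    (hcdf : ∀ j t, μ {ω | G j ω ≤ t} = ENNReal.ofReal (exp (-exp (-t))))
    (hc : 0 ≤ c) (happrox : ∀ i ∉ S, ∀ j ∈ S, x i - x j ≤ c) (i : ι) :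
    ENNReal.ofReal (exp (-c) * (exp (x i) / ∑ j, exp (x j))) ≤
      μ {ω | Outputs S hS x (fun j => G j ω) i} := by
  set d := Function.update x i (x i - c)
  have hd_le : d ≤ x := update_le_iff.mpr ⟨by linarith, fun _ _ => le_rfl⟩
  calc ENNReal.ofReal (exp (-c) * (exp (x i) / ∑ j, exp (x j)))
      ≤ ENNReal.ofReal (exp (d i) / ∑ j, exp (d j)) := by
        have hsum_pos : 0 < ∑ j, exp (d j) := sum_pos (fun j _ => exp_pos _) ⟨i, mem_univ i⟩
        refine ENNReal.ofReal_le_ofReal ?_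
        calc exp (-c) * (exp (x i) / ∑ j, exp (x j)) = exp (d i) / ∑ j, exp (x j) := by
              rw [show d i = x i - c from Function.update_self .., exp_sub, exp_neg]
              ring
          _ ≤ exp (d i) / ∑ j, exp (d j) := by gcongr with j; exact hd_le j
    _ = μ {ω | ∀ j ≠ i, G j ω + d j < G i ω + d i} :=
        (measure_forall_ne_add_lt_add_of_gumbel hmeas hindep hcdf i d).symm
    _ ≤ μ {ω | Outputs S hS x (fun j => G j ω) i} := measure_mono fun ω hω =>
        outputs_of_forall_add_lt hc happrox fun j hj => by
          have := hω j hj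
          simp only [d, Function.update_self, Function.update_of_ne hj] at this
          linarith

lemma measure_outputs_le_ofReal_exp_mul (hmeas : ∀ j, Measurable (G j))
    (hindep : iIndepFun G μ)
    (hcdf : ∀ j t, μ {ω | G j ω ≤ t} = ENNReal.ofReal (exp (-exp (-t))))
    (hc : 0 ≤ c) (happrox : ∀ i ∉ S, ∀ j ∈ S, x i - x j ≤ c) (i : ι) :
    μ {ω | Outputs S hS x (fun j => G j ω) i} ≤
      ENNReal.ofReal (exp c * (exp (x i) / ∑ j, exp (x j))) := by
  have hsum_pos : 0 < ∑ j, exp (x j) := sum_pos (fun j _ => exp_pos _) ⟨i, mem_univ i⟩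
  -- Unsampled indices only satisfy `x j + g j ≤ x i + g i + c`, not the strict inequality of the
  -- Gumbel-max formula; apply it with margins `c' > c` and let `c'` decrease to `c`.
  have hbound : ∀ c' > c, μ {ω | Outputs S hS x (fun j => G j ω) i} ≤
      ENNReal.ofReal (exp c' * (exp (x i) / ∑ j, exp (x j))) := by
    intro c' hc'
    set d := Function.update x i (x i + c')
    have hle_d : x ≤ d := le_update_iff.mpr ⟨by linarith, fun _ _ => le_rfl⟩
    calc μ {ω | Outputs S hS x (fun j => G j ω) i}
        ≤ μ {ω | ∀ j ≠ i, G j ω + d j < G i ω + d i} := measure_mono fun ω hω j hj => by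
          have := add_le_add_add_of_outputs hc happrox hω hj
          simp only [d, Function.update_self, Function.update_of_ne hj]
          linarith
      _ = ENNReal.ofReal (exp (d i) / ∑ j, exp (d j)) :=
          measure_forall_ne_add_lt_add_of_gumbel hmeas hindep hcdf i d
      _ ≤ ENNReal.ofReal (exp c' * (exp (x i) / ∑ j, exp (x j))) := by
          refine ENNReal.ofReal_le_ofReal ?_
          calc exp (d i) / ∑ j, exp (d j) ≤ exp (d i) / ∑ j, exp (x j) := by
                gcongr with j; exact hle_d j
            _ = exp c' * (exp (x i) / ∑ j, exp (x j)) := by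
                rw [show d i = x i + c' from Function.update_self .., exp_add]
                ring
  have hcont : Tendsto (fun c' => ENNReal.ofReal (exp c' * (exp (x i) / ∑ j, exp (x j))))
      (𝓝[>] c) (𝓝 (ENNReal.ofReal (exp c * (exp (x i) / ∑ j, exp (x j))))) :=
    (ENNReal.continuous_ofReal.comp (continuous_exp.mul continuous_const)).continuousAt.tendsto
      |>.mono_left nhdsWithin_le_nhds
  exact ge_of_tendsto hcont (eventually_nhdsWithin_of_forall hbound)

end LazyGumbel

open LazyGumbel

theorem lazy_gumbel_approx_two_sided_general {Ω : Type*} [MeasurableSpace Ω]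
    (μ : Measure Ω) {n : ℕ} (x : Fin n → ℝ)
    (G : Fin n → Ω → ℝ) (hmeas : ∀ i, Measurable (G i))
    (hindep : iIndepFun G μ)
    (hcdf : ∀ i t, μ {ω | G i ω ≤ t} = ENNReal.ofReal (Real.exp (-Real.exp (-t))))
    (c : ℝ) (hc : 0 ≤ c) (S : Finset (Fin n)) (hS : S.Nonempty)
    (happrox : ∀ i ∉ S, ∀ j ∈ S, x i - x j ≤ c)
    (B : Ω → ℝ)
    (hB : ∀ ω, B ω = S.sup' hS (fun j => x j + G j ω) - S.inf' hS x)
    (eligible : Fin n → Ω → Prop)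
    (helig : ∀ j ω, eligible j ω ↔ (j ∈ S ∨ B ω < G j ω))
    (i : Fin n) :
    ENNReal.ofReal (Real.exp (-c) * (Real.exp (x i) / ∑ j, Real.exp (x j))) ≤
        μ {ω | eligible i ω ∧
          ∀ j, eligible j ω → j ≠ i → x j + G j ω < x i + G i ω} ∧
      μ {ω | eligible i ω ∧
          ∀ j, eligible j ω → j ≠ i → x j + G j ω < x i + G i ω} ≤
        ENNReal.ofReal (Real.exp c * (Real.exp (x i) / ∑ j, Real.exp (x j))) := by
  have houtputs :
      {ω | eligible i ω ∧ ∀ j, eligible j ω → j ≠ i → x j + G j ω < x i + G i ω} =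
        {ω | Outputs S hS x (fun j => G j ω) i} := by
    ext ω
    simp only [Set.mem_ofPred_eq, Outputs, Eligible, helig, hB]
  rw [houtputs]
  exact ⟨ofReal_exp_neg_mul_le_measure_outputs hmeas hindep hcdf hc happrox i,
    measure_outputs_le_ofReal_exp_mul hmeas hindep hcdf hc happrox i⟩

/-- Two-sided bound for lazy Gumbel sampling with a `c`-approximate top-`k` set `S`:
for every index `i`, the probability that the approximate sampler `I'` outputs `i`
lies within a multiplicative factor `e^{±c}` of the exact softmax probability
`exp (x i) / ∑ j, exp (x j)`. -/
theorem lazy_gumbel_approx_two_sided {Ω : Type*} [MeasurableSpace Ω]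
    (μ : Measure Ω) [IsProbabilityMeasure μ] {n : ℕ} (x : Fin n → ℝ)
    (G : Fin n → Ω → ℝ) (hmeas : ∀ i, Measurable (G i))
    (hindep : iIndepFun G μ)
    (hcdf : ∀ i t, μ {ω | G i ω ≤ t} = ENNReal.ofReal (Real.exp (-Real.exp (-t))))
    (k : ℕ) (c : ℝ) (hc : 0 ≤ c) (S Sstar : Finset (Fin n)) (hS : S.Nonempty)
    (hScard : S.card = k) (hSstarcard : Sstar.card = k)
    (htop : ∀ i ∈ Sstar, ∀ j ∉ Sstar, x j ≤ x i)
    (happrox : ∀ i ∉ S, ∀ j ∈ S, x i - x j ≤ c)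
    (B : Ω → ℝ)
    (hB : ∀ ω, B ω = S.sup' hS (fun j => x j + G j ω) - S.inf' hS x)
    (eligible : Fin n → Ω → Prop)
    (helig : ∀ j ω, eligible j ω ↔ (j ∈ S ∨ B ω < G j ω))
    (i : Fin n) :
    ENNReal.ofReal (Real.exp (-c) * (Real.exp (x i) / ∑ j, Real.exp (x j))) ≤
        μ {ω | eligible i ω ∧
          ∀ j, eligible j ω → j ≠ i → x j + G j ω < x i + G i ω} ∧
      μ {ω | eligible i ω ∧
          ∀ j, eligible j ω → j ≠ i → x j + G j ω < x i + G i ω} ≤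
        ENNReal.ofReal (Real.exp c * (Real.exp (x i) / ∑ j, Real.exp (x j))) :=
  lazy_gumbel_approx_two_sided_general μ x G hmeas hindep hcdf c hc S hS happrox B hB eligible helig
    i
end

section
/- Let S be the exact top-k set of scores x_1 >= ... >= x_n (so S = {1,...,k}), and let G_j ~ Gumbel(0,1) i.i.d. for j in S. Define B = max_{j in S}(x_j + G_j) - min_{j in S} x_j, and let C ~ Binomial(n - k, 1 - exp(-exp(-B))) conditioned on B. Then E[C] <= n/k; in particular, for k = ceil(sqrt(n)), E[C] <= sqrt(n). -/
/-!
For `j ∈ S` we have `B ≥ G j`, because `x j ≥ min_S x`. The Gumbel survival function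
`s(g) = 1 - exp (-exp (-g))` is antitone and `s(G j)` is uniform on `[0, 1]`, so by
independence `P(s(B) ≥ t) ≤ ∏_j P(s(G j) ≥ t) = (1 - t) ^ k`. The layer-cake formula then gives
`E[s(B)] ≤ ∫₀¹ (1 - t) ^ k dt = 1 / (k + 1)`, and `(n - k) / (k + 1) ≤ n / k`.
-/

open MeasureTheory ProbabilityTheory Real Set

noncomputable def gumbelSurvival (g : ℝ) : ℝ := 1 - exp (-exp (-g))

lemma gumbelSurvival_pos (g : ℝ) : 0 < gumbelSurvival g := by
  have : exp (-exp (-g)) < 1 := exp_lt_one_iff.mpr (neg_lt_zero.mpr (exp_pos _))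
  unfold gumbelSurvival
  linarith

lemma gumbelSurvival_lt_one (g : ℝ) : gumbelSurvival g < 1 := by
  have := exp_pos (-exp (-g))
  unfold gumbelSurvival
  linarith

lemma antitone_gumbelSurvival : Antitone gumbelSurvival := fun a b hab => by
  have : exp (-exp (-a)) ≤ exp (-exp (-b)) := by gcongr
  unfold gumbelSurvival
  linarith

lemma continuous_gumbelSurvival : Continuous gumbelSurvival := by
  unfold gumbelSurvival
  fun_prop

lemma le_gumbelSurvival_iff {t g : ℝ} (ht0 : 0 < t) (ht1 : t < 1) :
    t ≤ gumbelSurvival g ↔ g ≤ -log (-log (1 - t)) := by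
  have h1t : 0 < 1 - t := by linarith
  have hlog : 0 < -log (1 - t) := neg_pos.mpr (log_neg h1t (by linarith))
  rw [gumbelSurvival, le_sub_comm, ← le_log_iff_exp_le h1t, neg_le,
    ← log_le_iff_le_exp hlog, le_neg]

lemma integral_one_sub_pow (k : ℕ) : ∫ t in (0 : ℝ)..1, (1 - t) ^ k = 1 / (k + 1) := by
  rw [intervalIntegral.integral_comp_sub_left (fun u => u ^ k)]
  norm_num [integral_pow]

lemma lintegral_Ioi_ofReal_one_sub_pow {k : ℕ} (hk : k ≠ 0) :
    ∫⁻ t in Ioi (0 : ℝ), ENNReal.ofReal (1 - t) ^ k = ENNReal.ofReal (1 / (k + 1)) := by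
  have hvanish : ∫⁻ t in Ioi (1 : ℝ), ENNReal.ofReal (1 - t) ^ k = 0 := by
    rw [setLIntegral_congr_fun measurableSet_Ioi fun t (ht : 1 < t) => by
      rw [ENNReal.ofReal_of_nonpos (by linarith), zero_pow hk], lintegral_zero]
  have hunit : ∫⁻ t in Ioc (0 : ℝ) 1, ENNReal.ofReal (1 - t) ^ k
      = ENNReal.ofReal (1 / (k + 1)) := by
    rw [setLIntegral_congr_fun measurableSet_Ioc fun t (ht : t ∈ Ioc (0 : ℝ) 1) =>
      (ENNReal.ofReal_pow (by linarith [ht.2]) k).symm,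
      ← ofReal_integral_eq_lintegral_ofReal
        (by fun_prop : Continuous fun t : ℝ => (1 - t) ^ k).integrableOn_Ioc
        ((ae_restrict_iff' measurableSet_Ioc).mpr
          (ae_of_all _ fun t ht => pow_nonneg (by linarith [ht.2]) k)),
      ← intervalIntegral.integral_of_le zero_le_one, integral_one_sub_pow]
  rw [← Ioc_union_Ioi_eq_Ioi zero_le_one, lintegral_union measurableSet_Ioi
    Ioc_disjoint_Ioi_same, hvanish, hunit, add_zero]

section Probability

variable {Ω : Type*} [MeasurableSpace Ω] {μ : Measure Ω}

/-- Probability integral transform: a Gumbel variable `X` makes `gumbelSurvival X` uniform. -/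
lemma measure_le_gumbelSurvival {X : Ω → ℝ}
    (hX : ∀ t, μ {ω | X ω ≤ t} = ENNReal.ofReal (exp (-exp (-t)))) {t : ℝ} (ht : 0 < t) :
    μ {ω | t ≤ gumbelSurvival (X ω)} = ENNReal.ofReal (1 - t) := by
  rcases lt_or_ge t 1 with ht1 | ht1
  · have h1t : 0 < 1 - t := by linarith
    have hlog : 0 < -log (1 - t) := neg_pos.mpr (log_neg h1t (by linarith))
    simp only [le_gumbelSurvival_iff ht ht1, hX, neg_neg, exp_log hlog, exp_log h1t]
  · have hempty : {ω | t ≤ gumbelSurvival (X ω)} = ∅ :=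
      eq_empty_of_forall_notMem fun ω hω => (gumbelSurvival_lt_one (X ω)).not_ge (ht1.trans hω)
    rw [hempty, measure_empty, ENNReal.ofReal_of_nonpos (by linarith)]

lemma measure_le_gumbelSurvival_of_forall_le {ι : Type*} [Fintype ι] {G : ι → Ω → ℝ}
    (hindep : iIndepFun G μ)
    (hcdf : ∀ j t, μ {ω | G j ω ≤ t} = ENNReal.ofReal (exp (-exp (-t))))
    {Y : Ω → ℝ} (hGY : ∀ ω j, G j ω ≤ Y ω) {t : ℝ} (ht : 0 < t) :
    μ {ω | t ≤ gumbelSurvival (Y ω)} ≤ ENNReal.ofReal (1 - t) ^ Fintype.card ι := by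
  have hsub : {ω | t ≤ gumbelSurvival (Y ω)} ⊆ ⋂ j, G j ⁻¹' {g | t ≤ gumbelSurvival g} :=
    fun ω hω => mem_iInter.mpr fun j => le_trans hω (antitone_gumbelSurvival (hGY ω j))
  have hprod : μ (⋂ j, G j ⁻¹' {g | t ≤ gumbelSurvival g})
      = ∏ j, μ (G j ⁻¹' {g | t ≤ gumbelSurvival g}) :=
    hindep.meas_iInter fun j =>
      ⟨_, measurableSet_le measurable_const continuous_gumbelSurvival.measurable, rfl⟩
  calc μ {ω | t ≤ gumbelSurvival (Y ω)}
      ≤ ∏ j, μ (G j ⁻¹' {g | t ≤ gumbelSurvival g}) := hprod ▸ measure_mono hsub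
    _ = ENNReal.ofReal (1 - t) ^ Fintype.card ι := by
      simp only [preimage_ofPred_eq, measure_le_gumbelSurvival (hcdf _) ht,
        Finset.prod_const, Finset.card_univ]

/-- A nonnegative variable whose tail is dominated by that of the minimum of `k` uniforms has
mean at most `1 / (k + 1)`. -/
lemma integral_le_of_measure_le_le_one_sub_pow {Z : Ω → ℝ} (hZ : Measurable Z)
    (hZ0 : ∀ ω, 0 ≤ Z ω) {k : ℕ} (hk : k ≠ 0)
    (htail : ∀ t, 0 < t → μ {ω | t ≤ Z ω} ≤ ENNReal.ofReal (1 - t) ^ k) :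
    ∫ ω, Z ω ∂μ ≤ 1 / (k + 1) := by
  have hZ0' : 0 ≤ᵐ[μ] Z := ae_of_all _ hZ0
  rw [integral_eq_lintegral_of_nonneg_ae hZ0' hZ.aestronglyMeasurable]
  refine ENNReal.toReal_le_of_le_ofReal (by positivity) ?_
  rw [lintegral_eq_lintegral_meas_le μ hZ0' hZ.aemeasurable,
    ← lintegral_Ioi_ofReal_one_sub_pow hk]
  exact setLIntegral_mono
    ((ENNReal.measurable_ofReal.comp (measurable_const.sub measurable_id)).pow_const k)
    fun t ht => htail t ht

end Probability

lemma sub_mul_one_div_succ_le_div {n k : ℝ} (hk : 0 < k) (hkn : k ≤ n) :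
    (n - k) * (1 / (k + 1)) ≤ n / k := by
  rw [mul_one_div, div_le_div_iff₀ (by linarith) hk]
  nlinarith

lemma div_natCeil_sqrt_le_sqrt (n : ℕ) : (n : ℝ) / ⌈√n⌉₊ ≤ √n := by
  rcases (Nat.zero_le n).eq_or_lt with rfl | hn
  · simp
  calc (n : ℝ) / ⌈√n⌉₊ ≤ n / √n :=
        div_le_div_of_nonneg_left n.cast_nonneg (sqrt_pos.mpr (by exact_mod_cast hn))
          (Nat.le_ceil _)
    _ = √n := div_sqrt

theorem lazy_gumbel_expected_extra_samples_general {Ω : Type*} [MeasurableSpace Ω]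
    (μ : Measure Ω) {n k : ℕ} (hk : 0 < k) (hkn : k ≤ n)
    (x : Fin n → ℝ)
    (G : Fin k → Ω → ℝ) (hmeas : ∀ j, Measurable (G j))
    (hindep : iIndepFun G μ)
    (hcdf : ∀ j t, μ {ω | G j ω ≤ t} = ENNReal.ofReal (Real.exp (-Real.exp (-t))))
    (B : Ω → ℝ)
    (hB : ∀ ω, B ω =
      (⨆ j : Fin k, (x (Fin.castLE hkn j) + G j ω)) - ⨅ j : Fin k, x (Fin.castLE hkn j)) :
    ((n : ℝ) - k) * ∫ ω, (1 - Real.exp (-Real.exp (-(B ω)))) ∂μ ≤ (n : ℝ) / k ∧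
    (k = ⌈Real.sqrt n⌉₊ →
      ((n : ℝ) - k) * ∫ ω, (1 - Real.exp (-Real.exp (-(B ω)))) ∂μ ≤ Real.sqrt n) := by
  have hBm : Measurable B := by
    rw [funext hB]
    exact (Measurable.iSup fun j => (hmeas j).const_add _).sub measurable_const
  have hGB : ∀ ω j, G j ω ≤ B ω := fun ω j => by
    have hsup := le_ciSup (finite_range fun i => x (Fin.castLE hkn i) + G i ω).bddAbove j
    have hinf := ciInf_le (finite_range fun i => x (Fin.castLE hkn i)).bddBelow j
    rw [hB]
    linarith
  have hmean : ∫ ω, gumbelSurvival (B ω) ∂μ ≤ 1 / (k + 1) := by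
    simpa using integral_le_of_measure_le_le_one_sub_pow
      (continuous_gumbelSurvival.measurable.comp hBm) (fun ω => (gumbelSurvival_pos _).le)
      hk.ne' fun t ht => by
        simpa using measure_le_gumbelSurvival_of_forall_le hindep hcdf hGB ht
  have hbound : ((n : ℝ) - k) * ∫ ω, gumbelSurvival (B ω) ∂μ ≤ n / k :=
    (mul_le_mul_of_nonneg_left hmean (sub_nonneg.mpr (by exact_mod_cast hkn))).trans
      (sub_mul_one_div_succ_le_div (by exact_mod_cast hk) (by exact_mod_cast hkn))
  exact ⟨hbound, fun hkc => hbound.trans (hkc ▸ div_natCeil_sqrt_le_sqrt n)⟩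

/-- Expected number of extra samples in lazy Gumbel sampling: with `S = {1, …, k}` the
exact top-`k` of the (descending) scores `x`, i.i.d. Gumbel noise `G j` on `S`,
threshold `B = max_{j∈S}(x j + G j) - min_{j∈S} x j`, and
`C ~ Bin(n - k, 1 - exp (-exp (-B)))` given `B`, the expectation
`E[C] = (n - k) E[1 - exp (-exp (-B))]` is at most `n / k`; in particular for
`k = ⌈√n⌉` it is at most `√n`. -/
theorem lazy_gumbel_expected_extra_samples {Ω : Type*} [MeasurableSpace Ω]
    (μ : Measure Ω) [IsProbabilityMeasure μ] {n k : ℕ} (hk : 0 < k) (hkn : k ≤ n)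
    (x : Fin n → ℝ) (hsorted : ∀ i j : Fin n, i ≤ j → x j ≤ x i)
    (G : Fin k → Ω → ℝ) (hmeas : ∀ j, Measurable (G j))
    (hindep : iIndepFun G μ)
    (hcdf : ∀ j t, μ {ω | G j ω ≤ t} = ENNReal.ofReal (Real.exp (-Real.exp (-t))))
    (B : Ω → ℝ)
    (hB : ∀ ω, B ω =
      (⨆ j : Fin k, (x (Fin.castLE hkn j) + G j ω)) - ⨅ j : Fin k, x (Fin.castLE hkn j)) :
    ((n : ℝ) - k) * ∫ ω, (1 - Real.exp (-Real.exp (-(B ω)))) ∂μ ≤ (n : ℝ) / k ∧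
    (k = ⌈Real.sqrt n⌉₊ →
      ((n : ℝ) - k) * ∫ ω, (1 - Real.exp (-Real.exp (-(B ω)))) ∂μ ≤ Real.sqrt n) :=
  lazy_gumbel_expected_extra_samples_general μ hk hkn x G hmeas hindep hcdf B hB
end
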